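/- Let d ≥ 1, let Σ be a d×d real symmetric positive definite matrix, and let X be a d×d real symmetric positive definite matrix with det X = 1 such that (Σ^{1/2} R Σ^{-1/2}) X (Σ^{1/2} R Σ^{-1/2})ᵀ = X for every R ∈ SO(d). Then X = (det Σ)^{-1/d} • Σ. In other words, the normalized matrix Σ̄ = (det Σ)^{-1/d} Σ is the unique determinant-one positive definite matrix fixed by the group H_Σ. -/

import Mathlib

open Matrix
open scoped Classical

/-- The positive semidefinite square root of a matrix, extended to a total function
(junk value `0` when the matrix is not positive semidefinite). -/

noncomputable def matSqrt {d : ℕ} (A : Matrix (Fin d) (Fin d) ℝ) : Matrix (Fin d) (Fin d) ℝ :=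
  if hA : A.PosSemidef then
    hA.1.eigenvectorUnitary.1 * diagonal ((↑) ∘ (√·) ∘ hA.1.eigenvalues) *
      (star hA.1.eigenvectorUnitary : Matrix (Fin d) (Fin d) ℝ)
  else 0

/-!
Write `A = Σ^{1/2}` (a symmetric unit) and `X = A Y A`. Then `G = A R A⁻¹` fixes `X` exactly
when `R Y Rᵀ = Y`, so `Y` is a symmetric matrix fixed by all of `SO(d)`. Conjugating by the
quarter turn in the `(i, j)`-plane swaps `Y i i` with `Y j j` and sends `Y i j` to
`-Y j i = -Y i j`, so `Y = c • 1` and `X = c • Σ`. Positive definiteness gives `c > 0`, and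
`det X = c ^ d * det Σ = 1` pins down `c = (det Σ)^{-1/d}`.
-/

namespace Matrix

variable {n : Type*} [Fintype n] [DecidableEq n] {R : Type*} [CommRing R]

lemma mul_mul_inv_action_mul_mul {A : Matrix n n R} (hA : A.IsSymm) (hAu : IsUnit A)
    (Q Y : Matrix n n R) :
    A * Q * A⁻¹ * (A * Y * A) * (A * Q * A⁻¹)ᵀ = A * (Q * Y * Qᵀ) * A := by
  have hdet := (isUnit_iff_isUnit_det A).mp hAu
  rw [transpose_mul, transpose_mul, transpose_nonsing_inv, hA.eq]
  simp only [mul_assoc, nonsing_inv_mul_cancel_left _ _ hdet, mul_nonsing_inv_cancel_left _ _ hdet]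

lemma permMatrix_mul_mul_transpose (σ : Equiv.Perm n) (Y : Matrix n n R) :
    σ.permMatrix R * Y * (σ.permMatrix R)ᵀ = Y.submatrix σ σ := by
  rw [transpose_permMatrix, PEquiv.toMatrix_toPEquiv_mul, PEquiv.mul_toMatrix_toPEquiv]
  rfl

/-- The quarter turn `e i ↦ e j`, `e j ↦ -e i` in the `(i, j)`-plane. -/
def signedSwap (i j : n) : Matrix n n R :=
  diagonal (fun k => if k = i then -1 else 1) * (Equiv.swap i j).permMatrix R

lemma signedSwap_mul_mul_transpose (i j : n) (Y : Matrix n n R) :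
    signedSwap i j * Y * (signedSwap i j)ᵀ =
      diagonal (fun k => if k = i then -1 else 1) * Y.submatrix (Equiv.swap i j) (Equiv.swap i j) *
        diagonal (fun k => if k = i then -1 else 1) := by
  rw [signedSwap, transpose_mul, diagonal_transpose, ← permMatrix_mul_mul_transpose]
  simp only [mul_assoc]

lemma signedSwap_mem_specialOrthogonalGroup {i j : n} (hij : i ≠ j) :
    signedSwap i j ∈ specialOrthogonalGroup n R := by
  rw [mem_specialOrthogonalGroup_iff, mem_orthogonalGroup_iff]
  constructor
  · have h := signedSwap_mul_mul_transpose i j (1 : Matrix n n R)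
    rw [mul_one, submatrix_one_equiv, mul_one, diagonal_mul_diagonal] at h
    rw [h, ← diagonal_one]
    congr 1
    ext k
    split_ifs <;> simp
  · rw [signedSwap, det_mul, det_diagonal, det_permutation, Equiv.Perm.sign_swap hij,
      Finset.prod_ite_eq']
    simp

theorem exists_eq_smul_one_of_forall_specialOrthogonal_conj_eq [NoZeroDivisors R] [CharZero R]
    {Y : Matrix n n R} (hY : Y.IsSymm)
    (hfix : ∀ Q ∈ specialOrthogonalGroup n R, Q * Y * Qᵀ = Y) : ∃ c : R, Y = c • 1 := by
  have hentries : ∀ i j, i ≠ j → Y j j = Y i i ∧ Y i j = 0 := by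
    intro i j hij
    have h := hfix _ (signedSwap_mem_specialOrthogonalGroup hij)
    rw [signedSwap_mul_mul_transpose] at h
    have hjj := congr_fun₂ h j j
    have hij' := congr_fun₂ h i j
    simp only [mul_diagonal, diagonal_mul, submatrix_apply, Equiv.swap_apply_left,
      Equiv.swap_apply_right, if_pos, if_neg hij.symm, one_mul, mul_one, neg_mul] at hjj hij'
    rw [hY.apply i j, CharZero.neg_eq_self_iff] at hij'
    exact ⟨hjj.symm, hij'⟩
  cases isEmpty_or_nonempty n with
  | inl _ => exact ⟨0, Subsingleton.elim _ _⟩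
  | inr hn =>
    obtain ⟨i⟩ := hn
    refine ⟨Y i i, ext fun a b => ?_⟩
    rcases eq_or_ne a b with rfl | hab
    · rcases eq_or_ne i a with rfl | hia
      · simp
      · simp [(hentries i a hia).1]
    · simp [(hentries a b hab).2, hab]

end Matrix

lemma Matrix.pos_of_posDef_smul {n : Type*} [Nonempty n] {S : Matrix n n ℝ} {c : ℝ}
    (hS : S.PosDef) (hcS : (c • S).PosDef) : 0 < c := by
  obtain ⟨i⟩ := ‹Nonempty n›
  have := hcS.diag_pos (i := i)
  rw [smul_apply, smul_eq_mul] at this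
  exact (mul_pos_iff_of_pos_right hS.diag_pos).mp this

section matSqrt

open scoped MatrixOrder

variable {d : ℕ} {A : Matrix (Fin d) (Fin d) ℝ}

lemma matSqrt_eq_cfcSqrt (hA : A.PosSemidef) : matSqrt A = CFC.sqrt A := by
  rw [matSqrt, dif_pos hA, CFC.sqrt_eq_real_sqrt A hA.nonneg, cfcₙ_eq_cfc, hA.1.cfc_eq,
    IsHermitian.cfc, Unitary.conjStarAlgAut_apply]
  rfl

lemma matSqrt_mul_self (hA : A.PosSemidef) : matSqrt A * matSqrt A = A := by
  rw [matSqrt_eq_cfcSqrt hA]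
  exact CFC.sqrt_mul_sqrt_self A hA.nonneg

lemma isSymm_matSqrt (A : Matrix (Fin d) (Fin d) ℝ) : (matSqrt A).IsSymm := by
  by_cases hA : A.PosSemidef
  · rw [matSqrt_eq_cfcSqrt hA]
    exact (CFC.sqrt_nonneg A).isSelfAdjoint
  · rw [matSqrt, dif_neg hA]
    exact isSymm_zero

lemma isUnit_matSqrt (hA : A.PosDef) : IsUnit (matSqrt A) := by
  rw [matSqrt_eq_cfcSqrt hA.posSemidef, CFC.isUnit_sqrt_iff A hA.posSemidef.nonneg]
  exact hA.isUnit

end matSqrt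

lemma Real.eq_rpow_neg_inv_of_pow_mul_eq_one {c s : ℝ} {n : ℕ} (hn : n ≠ 0) (hc : 0 < c)
    (h : c ^ n * s = 1) : c = s ^ (-(1 : ℝ) / n) := by
  rw [eq_inv_of_mul_eq_one_right h, neg_div, Real.rpow_neg (by positivity),
    Real.inv_rpow (by positivity), inv_inv, one_div, Real.pow_rpow_inv_natCast hc.le hn]

theorem unique_detOne_fixed_point_general (d : ℕ)
    (S X : Matrix (Fin d) (Fin d) ℝ) (hS : S.PosDef) (hX : X.PosDef) (hdet : X.det = 1)
    (hfix : ∀ R : Matrix (Fin d) (Fin d) ℝ, R * Rᵀ = 1 → R.det = 1 →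
      (matSqrt S * R * (matSqrt S)⁻¹) * X * (matSqrt S * R * (matSqrt S)⁻¹)ᵀ = X) :
    X = (S.det ^ (-(1 : ℝ) / d)) • S := by
  obtain rfl | hd := eq_or_ne d 0
  · exact Subsingleton.elim _ _
  have : Nonempty (Fin d) := Fin.pos_iff_nonempty.mp (Nat.pos_of_ne_zero hd)
  set A := matSqrt S
  have hA : IsUnit A := isUnit_matSqrt hS
  have hAdet : IsUnit A.det := (isUnit_iff_isUnit_det A).mp hA
  obtain ⟨Y, rfl⟩ : ∃ Y, X = A * Y * A :=
    ⟨A⁻¹ * X * A⁻¹, by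
      simp [mul_assoc, nonsing_inv_mul _ hAdet, mul_nonsing_inv_cancel_left _ _ hAdet]⟩
  have hY : Y.IsSymm := by
    have h := hX.isHermitian
    rw [IsHermitian, conjTranspose_eq_transpose_of_trivial, transpose_mul, transpose_mul,
      (isSymm_matSqrt S).eq, ← mul_assoc, hA.mul_left_inj, hA.mul_right_inj] at h
    exact h
  have hYfix : ∀ Q ∈ specialOrthogonalGroup (Fin d) ℝ, Q * Y * Qᵀ = Y := by
    intro Q hQ
    rw [mem_specialOrthogonalGroup_iff, mem_orthogonalGroup_iff] at hQ
    have h := hfix Q hQ.1 hQ.2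
    rwa [mul_mul_inv_action_mul_mul (isSymm_matSqrt S) hA, hA.mul_left_inj, hA.mul_right_inj] at h
  obtain ⟨c, rfl⟩ := exists_eq_smul_one_of_forall_specialOrthogonal_conj_eq hY hYfix
  have hXS : A * (c • 1) * A = c • S := by
    rw [Matrix.mul_smul, mul_one, Matrix.smul_mul, matSqrt_mul_self hS.posSemidef]
  rw [hXS] at hX hdet ⊢
  rw [det_smul, Fintype.card_fin] at hdet
  rw [← Real.eq_rpow_neg_inv_of_pow_mul_eq_one hd (pos_of_posDef_smul hS hX) hdet]

/-- If a real symmetric positive definite `d × d` matrix `X` with `det X = 1`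
is fixed by the action `G · X = G X Gᵀ` of every `G = Σ^{1/2} R Σ^{-1/2}` with `R ∈ SO(d)`,
then `X = (det Σ)^{-1/d} • Σ`, i.e. `X` is the determinant-one normalization of `Σ`. -/
theorem unique_detOne_fixed_point (d : ℕ) (hd : 1 ≤ d)
    (S X : Matrix (Fin d) (Fin d) ℝ) (hS : S.PosDef) (hX : X.PosDef) (hdet : X.det = 1)
    (hfix : ∀ R : Matrix (Fin d) (Fin d) ℝ, R * Rᵀ = 1 → R.det = 1 →
      (matSqrt S * R * (matSqrt S)⁻¹) * X * (matSqrt S * R * (matSqrt S)⁻¹)ᵀ = X) :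
    X = (S.det ^ (-(1 : ℝ) / d)) • S :=
  unique_detOne_fixed_point_general d S X hS hX hdet hfix
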